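/- For all parameters A, B, C ∈ ℂ with C ≠ 0, C ≠ 1 and (C;q)_n ≠ 0 for all n, all x ∈ ℂ with |x| < 1, and all y ∈ ℂ with 0 < |y| < 1, one has (D_q g)(y) = (1/(1−q))·[((1−A/C)/(1−C))·Φ₁(A,B;qC;q,q₁;x,y) + (A/C)·Φ₁(A,B;C;q,q₁;x,y)], where g is the function y ↦ Φ₁(A,B;C;q,q₁;x,y) and D_q is the Jackson q-derivative in y. (Equation (2.21), with q^{a−c} = A/C.) -/

import Mathlib

/-!
Expanding `Φ₁ = ∑ c_{ℓ,k} x^ℓ y^k`, the Jackson derivative in `y` sends `y^k` to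
`(1 - q^k)/(1 - q) · y^(k-1)`, and the factor `1 - q^k` cancels against the last factor of
`(q;q)_k`. After the shift `k ↦ k + 1` the coefficient of `x^ℓ y^k` carries
`(A;q)_{n+1}/(C;q)_{n+1}` with `n = ℓ + k`, and the contiguous relation
`(A;q)_{n+1}/(C;q)_{n+1} = (1 - A/C)/(1 - C) · (A;q)_n/(qC;q)_n + A/C · (A;q)_n/(C;q)_n`,
a consequence of `(C;q)_{n+1} = (C;q)_n (1 - C q^n) = (1 - C) (qC;q)_n`, splits it into the two
series on the right. All series converge absolutely because each `(z;q)_n` tends to the infinite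
product `∏ (1 - z q^r)`, which is nonzero when no factor vanishes, so the coefficients
`c_{ℓ,k}` are bounded.
-/

open Complex

/-- The q-shifted factorial (z;q)_n = prod_{r=0}^{n-1} (1 - z q^r). -/
noncomputable def qPoch (q z : ℂ) (n : ℕ) : ℂ :=
  ∏ r ∈ Finset.range n, (1 - z * q ^ r)

/-- The bibasic Humbert hypergeometric function Φ₁ on two independent bases q and q₁. -/
noncomputable def Phi1 (q q1 A B C x y : ℂ) : ℂ :=
  ∑' p : ℕ × ℕ,
    qPoch q A (p.1 + p.2) * qPoch q1 B p.1 /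
      (qPoch q C (p.1 + p.2) * qPoch q1 q1 p.1 * qPoch q q p.2) * x ^ p.1 * y ^ p.2

/-- The Jackson p-derivative. -/
noncomputable def jackson (p : ℂ) (f : ℂ → ℂ) (x : ℂ) : ℂ :=
  (f x - f (p * x)) / ((1 - p) * x)

open Filter Topology

section QPochhammer

lemma qPoch_succ (q z : ℂ) (n : ℕ) : qPoch q z (n + 1) = qPoch q z n * (1 - z * q ^ n) :=
  Finset.prod_range_succ _ n

lemma qPoch_succ_eq_one_sub_mul (q z : ℂ) (n : ℕ) :
    qPoch q z (n + 1) = (1 - z) * qPoch q (q * z) n := by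
  induction n with
  | zero => simp [qPoch]
  | succ n ih => rw [qPoch_succ, ih, qPoch_succ]; ring

variable {q : ℂ}

lemma qPoch_succ_div_qPoch_succ {A C : ℂ} (hC0 : C ≠ 0) {n : ℕ} (hCn : qPoch q C (n + 1) ≠ 0) :
    qPoch q A (n + 1) / qPoch q C (n + 1) =
      (1 - A / C) / (1 - C) * (qPoch q A n / qPoch q (q * C) n) +
        A / C * (qPoch q A n / qPoch q C n) := by
  have hsucc := qPoch_succ q C n
  have hshift := qPoch_succ_eq_one_sub_mul q C n
  have hC : qPoch q C n ≠ 0 := left_ne_zero_of_mul (hsucc ▸ hCn)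
  have hf : 1 - C * q ^ n ≠ 0 := right_ne_zero_of_mul (hsucc ▸ hCn)
  have h1C : 1 - C ≠ 0 := left_ne_zero_of_mul (hshift ▸ hCn)
  have hqC : qPoch q (q * C) n = qPoch q C n * (1 - C * q ^ n) / (1 - C) := by
    rw [eq_div_iff h1C, ← hsucc, hshift, mul_comm]
  rw [qPoch_succ q A n, hsucc, hqC]
  obtain ⟨f, hfdef⟩ : ∃ f, f = 1 - C * q ^ n := ⟨_, rfl⟩
  rw [← hfdef] at hf ⊢
  field_simp
  linear_combination -(qPoch q A n * A) * hfdef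

lemma one_sub_mul_pow_ne_zero {z : ℂ} (hz : ∀ n, qPoch q z n ≠ 0) (r : ℕ) : 1 - z * q ^ r ≠ 0 :=
  right_ne_zero_of_mul (qPoch_succ q z r ▸ hz (r + 1))

lemma qPoch_ne_zero_of_norm_lt_one {z : ℂ} (hz : ‖z‖ < 1) (hq : ‖q‖ ≤ 1) (n : ℕ) :
    qPoch q z n ≠ 0 := by
  refine Finset.prod_ne_zero_iff.mpr fun r _ h => ?_
  have hlt : ‖z * q ^ r‖ < 1 := by
    rw [norm_mul, norm_pow]
    exact (mul_le_of_le_one_right (norm_nonneg z) (pow_le_one₀ (norm_nonneg q) hq)).trans_lt hz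
  rw [← sub_eq_zero.mp h, norm_one] at hlt
  exact hlt.false

lemma summable_norm_mul_pow (hq : ‖q‖ < 1) (z : ℂ) : Summable fun r : ℕ => ‖z * q ^ r‖ := by
  simpa [norm_mul, norm_pow] using (summable_geometric_of_lt_one (norm_nonneg q) hq).mul_left ‖z‖

lemma multipliable_one_sub_mul_pow (hq : ‖q‖ < 1) (z : ℂ) :
    Multipliable fun r : ℕ => 1 - z * q ^ r := by
  simpa only [← sub_eq_add_neg] using
    Complex.multipliable_one_add_of_summable (summable_norm_mul_pow hq z).of_norm.neg

lemma tendsto_qPoch (hq : ‖q‖ < 1) (z : ℂ) :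
    Tendsto (qPoch q z) atTop (𝓝 (∏' r, (1 - z * q ^ r))) :=
  (multipliable_one_sub_mul_pow hq z).hasProd.tendsto_prod_nat

lemma tprod_one_sub_ne_zero (hq : ‖q‖ < 1) {z : ℂ} (hz : ∀ n, qPoch q z n ≠ 0) :
    ∏' r, (1 - z * q ^ r) ≠ 0 := by
  simpa only [← sub_eq_add_neg] using tprod_one_add_ne_zero_of_summable (f := fun r => -(z * q ^ r))
    (by simpa only [← sub_eq_add_neg] using one_sub_mul_pow_ne_zero hz)
    (by simpa only [norm_neg] using summable_norm_mul_pow hq z)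

lemma exists_norm_qPoch_le (hq : ‖q‖ < 1) (z : ℂ) : ∃ K > 0, ∀ n, ‖qPoch q z n‖ ≤ K := by
  obtain ⟨K, hK0, hK⟩ :=
    (Metric.isBounded_range_of_tendsto _ (tendsto_qPoch hq z)).exists_pos_norm_le
  exact ⟨K, hK0, fun n => hK _ ⟨n, rfl⟩⟩

lemma exists_norm_qPoch_inv_le (hq : ‖q‖ < 1) {z : ℂ} (hz : ∀ n, qPoch q z n ≠ 0) :
    ∃ K > 0, ∀ n, ‖(qPoch q z n)⁻¹‖ ≤ K := by
  obtain ⟨K, hK0, hK⟩ := (Metric.isBounded_range_of_tendsto _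
    ((tendsto_qPoch hq z).inv₀ (tprod_one_sub_ne_zero hq hz))).exists_pos_norm_le
  exact ⟨K, hK0, fun n => hK _ ⟨n, rfl⟩⟩

end QPochhammer

lemma summable_mul_pow_mul_pow_of_norm_le {c : ℕ × ℕ → ℂ} {K : ℝ} (hc : ∀ p, ‖c p‖ ≤ K)
    {x y : ℂ} (hx : ‖x‖ < 1) (hy : ‖y‖ < 1) :
    Summable fun p : ℕ × ℕ => c p * x ^ p.1 * y ^ p.2 := by
  have hgeom : Summable fun p : ℕ × ℕ => K * (‖x‖ ^ p.1 * ‖y‖ ^ p.2) :=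
    ((summable_geometric_of_lt_one (norm_nonneg x) hx).mul_of_nonneg
      (summable_geometric_of_lt_one (norm_nonneg y) hy)
      (fun _ => by positivity) (fun _ => by positivity)).mul_left K
  refine hgeom.of_norm_bounded fun p => ?_
  rw [norm_mul, norm_mul, norm_pow, norm_pow, mul_assoc]
  exact mul_le_mul_of_nonneg_right (hc p) (by positivity)

lemma jackson_tsum_mul_pow {ι : Type*} {c : ι × ℕ → ℂ} {q y : ℂ} (hy : y ≠ 0)
    (hsum : Summable fun p : ι × ℕ => c p * y ^ p.2)
    (hsum_q : Summable fun p : ι × ℕ => c p * (q * y) ^ p.2) :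
    jackson q (fun u => ∑' p : ι × ℕ, c p * u ^ p.2) y =
      ∑' p : ι × ℕ, c (p.1, p.2 + 1) * ((1 - q ^ (p.2 + 1)) / (1 - q)) * y ^ p.2 := by
  have hshift : Function.Injective fun p : ι × ℕ => (p.1, p.2 + 1) := fun a b h => by
    simp only [Prod.mk.injEq, add_left_inj] at h
    exact Prod.ext h.1 h.2
  have hsupp : Function.support (fun p : ι × ℕ => c p * (1 - q ^ p.2) * y ^ p.2 / ((1 - q) * y))
      ⊆ Set.range fun p : ι × ℕ => (p.1, p.2 + 1) := by
    rintro ⟨i, _ | k⟩ hp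
    · simp at hp
    · exact ⟨(i, k), rfl⟩
  rw [jackson, ← hsum.tsum_sub hsum_q, ← tsum_div_const]
  calc ∑' p : ι × ℕ, (c p * y ^ p.2 - c p * (q * y) ^ p.2) / ((1 - q) * y)
      = ∑' p : ι × ℕ, c p * (1 - q ^ p.2) * y ^ p.2 / ((1 - q) * y) := by
        congr 1; ext p; ring
    _ = ∑' p : ι × ℕ, c (p.1, p.2 + 1) * (1 - q ^ (p.2 + 1)) * y ^ (p.2 + 1) / ((1 - q) * y) :=
        (hshift.tsum_eq hsupp).symm
    _ = _ := by
        congr 1; ext p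
        rw [pow_succ y, ← mul_assoc, mul_div_mul_right _ _ hy]
        ring

section Phi1

variable {q q1 A B C : ℂ}

noncomputable def phi1Coeff (q q1 A B C : ℂ) (p : ℕ × ℕ) : ℂ :=
  qPoch q A (p.1 + p.2) * qPoch q1 B p.1 /
    (qPoch q C (p.1 + p.2) * qPoch q1 q1 p.1 * qPoch q q p.2)

lemma Phi1_eq_tsum_phi1Coeff (x y : ℂ) :
    Phi1 q q1 A B C x y = ∑' p : ℕ × ℕ, phi1Coeff q q1 A B C p * x ^ p.1 * y ^ p.2 :=
  rfl

lemma exists_norm_phi1Coeff_le (hq : ‖q‖ < 1) (hq1 : ‖q1‖ < 1) (hC : ∀ n, qPoch q C n ≠ 0) :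
    ∃ K, ∀ p, ‖phi1Coeff q q1 A B C p‖ ≤ K := by
  obtain ⟨KA, KA0, hA⟩ := exists_norm_qPoch_le hq A
  obtain ⟨KB, KB0, hB⟩ := exists_norm_qPoch_le hq1 B
  obtain ⟨KC, KC0, hC⟩ := exists_norm_qPoch_inv_le hq hC
  obtain ⟨K1, K10, h1⟩ := exists_norm_qPoch_inv_le hq1 (qPoch_ne_zero_of_norm_lt_one hq1 hq1.le)
  obtain ⟨Kq, Kq0, hq⟩ := exists_norm_qPoch_inv_le hq (qPoch_ne_zero_of_norm_lt_one hq hq.le)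
  refine ⟨KA * KB * (KC * K1 * Kq), fun p => ?_⟩
  rw [phi1Coeff, div_eq_mul_inv, mul_inv, mul_inv, norm_mul, norm_mul, norm_mul, norm_mul]
  gcongr
  exacts [hA _, hB _, hC _, h1 _, hq _]

lemma summable_phi1 (hq : ‖q‖ < 1) (hq1 : ‖q1‖ < 1) (hC : ∀ n, qPoch q C n ≠ 0) {x y : ℂ}
    (hx : ‖x‖ < 1) (hy : ‖y‖ < 1) :
    Summable fun p : ℕ × ℕ => phi1Coeff q q1 A B C p * x ^ p.1 * y ^ p.2 :=
  have ⟨_, hK⟩ := exists_norm_phi1Coeff_le (A := A) (B := B) hq hq1 hC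
  summable_mul_pow_mul_pow_of_norm_le hK hx hy

lemma phi1Coeff_eq_div_mul (p : ℕ × ℕ) :
    phi1Coeff q q1 A B C p = qPoch q A (p.1 + p.2) / qPoch q C (p.1 + p.2) *
      (qPoch q1 B p.1 / (qPoch q1 q1 p.1 * qPoch q q p.2)) := by
  rw [phi1Coeff, mul_assoc (qPoch q C _), mul_div_mul_comm]

lemma phi1Coeff_succ_mul (hq : ‖q‖ < 1) (hC : ∀ n, qPoch q C n ≠ 0) (hC0 : C ≠ 0) (l k : ℕ) :
    phi1Coeff q q1 A B C (l, k + 1) * (1 - q ^ (k + 1)) =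
      (1 - A / C) / (1 - C) * phi1Coeff q q1 A B (q * C) (l, k) +
        A / C * phi1Coeff q q1 A B C (l, k) := by
  have hqq := qPoch_succ q q k
  have hqk1 : 1 - q ^ (k + 1) ≠ 0 := pow_succ' q k ▸
    right_ne_zero_of_mul (hqq ▸ qPoch_ne_zero_of_norm_lt_one hq hq.le (k + 1))
  simp only [phi1Coeff_eq_div_mul, ← add_assoc, hqq, ← pow_succ']
  rw [← mul_assoc (qPoch q1 q1 l), ← div_div, mul_assoc, div_mul_cancel₀ _ hqk1,
    qPoch_succ_div_qPoch_succ hC0 (hC _)]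
  ring

end Phi1

theorem stmt16_general (q q1 A B C x y : ℂ)
    (hq1 : ‖q‖ < 1)
    (hq11 : ‖q1‖ < 1)
    (hC : ∀ n : ℕ, qPoch q C n ≠ 0)
    (hC0 : C ≠ 0) (hx : ‖x‖ < 1) (hy0 : 0 < ‖y‖) (hy : ‖y‖ < 1) :
    jackson q (fun u => Phi1 q q1 A B C x u) y =
      (1 / (1 - q)) *
        (((1 - A / C) / (1 - C)) * Phi1 q q1 A B (q * C) x y
          + (A / C) * Phi1 q q1 A B C x y) := by
  have hqy : ‖q * y‖ < 1 := by
    rw [norm_mul]; exact (mul_le_of_le_one_left (norm_nonneg y) hq1.le).trans_lt hy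
  have hqC (n : ℕ) : qPoch q (q * C) n ≠ 0 :=
    right_ne_zero_of_mul (qPoch_succ_eq_one_sub_mul q C n ▸ hC (n + 1))
  have hsum {u : ℂ} (hu : ‖u‖ < 1) := summable_phi1 (A := A) (B := B) hq1 hq11 hC hx hu
  simp only [Phi1_eq_tsum_phi1Coeff]
  rw [jackson_tsum_mul_pow (norm_pos_iff.mp hy0) (hsum hy) (hsum hqy), ← tsum_mul_left,
    ← tsum_mul_left,
    ← ((summable_phi1 hq1 hq11 hqC hx hy).mul_left _).tsum_add ((hsum hy).mul_left _),
    ← tsum_mul_left]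
  refine tsum_congr fun ⟨l, k⟩ => ?_
  linear_combination (x ^ l * y ^ k / (1 - q)) *
    phi1Coeff_succ_mul (q1 := q1) (A := A) (B := B) hq1 hC hC0 l k

theorem stmt16 (q q1 A B C x y : ℂ)
    (hq0 : 0 < ‖q‖) (hq1 : ‖q‖ < 1)
    (hq10 : 0 < ‖q1‖) (hq11 : ‖q1‖ < 1)
    (hC : ∀ n : ℕ, qPoch q C n ≠ 0)
    (hC0 : C ≠ 0) (hC1 : C ≠ 1) (hx : ‖x‖ < 1) (hy0 : 0 < ‖y‖) (hy : ‖y‖ < 1) :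
    jackson q (fun u => Phi1 q q1 A B C x u) y =
      (1 / (1 - q)) *
        (((1 - A / C) / (1 - C)) * Phi1 q q1 A B (q * C) x y
          + (A / C) * Phi1 q q1 A B C x y) :=
  stmt16_general q q1 A B C x y hq1 hq11 hC hC0 hx hy0 hy
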